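/- arXiv:1409.6937 — 5 statements merged into one kernel-verified Lean document; each statement's English description precedes it below -/
import Mathlib

section
/- Let ω ∈ ℂ be a primitive T-th root of unity and let k ∈ ℤ with [k] := k mod T taken in {0,1,…,T-1}. Then ∑_{r=1}^{T-1} (ω^{-kr} - 1)/(ω^r - 1) = [k]. -/
/-! Choose `m ≡ -k (mod T)` with `0 < m ≤ T`, namely `m = T - [k]`. Then each summand is the
geometric sum `∑_{j<m} ω^{jr}`; swapping the sums and using that `∑_{r<T} ω^{jr}` vanishes unless
`T ∣ j`, only `j = 0` survives, and the total is `T - m = [k]` (the missing `r = 0` term accounts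
for the `- m`). -/

open Finset

theorem zpow_eq_zpow_of_modEq {G₀ : Type*} [GroupWithZero G₀] {x : G₀} (hx : x ≠ 0) {n : ℕ}
    (hxn : x ^ n = 1) {a b : ℤ} (h : a ≡ b [ZMOD n]) : x ^ a = x ^ b := by
  obtain ⟨c, hc⟩ := h.dvd
  rw [show b = a + n * c by omega, zpow_add₀ hx, zpow_mul, zpow_natCast, hxn, one_zpow, mul_one]

namespace IsPrimitiveRoot

variable {K : Type*} [Field K] {ζ : K} {T : ℕ}

theorem geom_sum_pow (hζ : IsPrimitiveRoot ζ T) (j : ℕ) :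
    ∑ r ∈ range T, (ζ ^ j) ^ r = if T ∣ j then (T : K) else 0 := by
  split_ifs with hj
  · simp [(hζ.pow_eq_one_iff_dvd j).mpr hj]
  · rw [geom_sum_eq (mt (hζ.pow_eq_one_iff_dvd j).mp hj), pow_right_comm, hζ.pow_eq_one,
      one_pow, sub_self, zero_div]

theorem sum_pow_sub_one_div_pow_sub_one (hζ : IsPrimitiveRoot ζ T) {m : ℕ} (hm : 0 < m)
    (hmT : m ≤ T) :
    ∑ r ∈ Ico 1 T, ((ζ ^ r) ^ m - 1) / (ζ ^ r - 1) = T - m := by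
  have hT : 0 < T := hm.trans_le hmT
  have hterm : ∀ r ∈ Ico 1 T, ((ζ ^ r) ^ m - 1) / (ζ ^ r - 1) = ∑ j ∈ range m, (ζ ^ j) ^ r := by
    intro r hr
    rw [mem_Ico] at hr
    rw [← geom_sum_eq (hζ.pow_ne_one_of_pos_of_lt (by omega) hr.2)]
    simp_rw [pow_right_comm]
  calc ∑ r ∈ Ico 1 T, ((ζ ^ r) ^ m - 1) / (ζ ^ r - 1)
      = ∑ r ∈ Ico 1 T, ∑ j ∈ range m, (ζ ^ j) ^ r := sum_congr rfl hterm
    _ = ∑ r ∈ range T, ∑ j ∈ range m, (ζ ^ j) ^ r - m := by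
      rw [sum_range_eq_add_Ico _ hT]
      simp
    _ = ∑ j ∈ range m, (if T ∣ j then (T : K) else 0) - m := by
      rw [sum_comm]
      simp_rw [hζ.geom_sum_pow]
    _ = T - m := by
      rw [sum_eq_single_of_mem 0 (mem_range.mpr hm), if_pos (dvd_zero T)]
      intro j hj hj0
      rw [if_neg (fun h => hj0 (Nat.eq_zero_of_dvd_of_lt h ((mem_range.mp hj).trans_le hmT)))]

end IsPrimitiveRoot

theorem cyclotomic_residue_mod_sum (T : ℕ) (hT : 1 ≤ T) (ω : ℂ)
    (hω : IsPrimitiveRoot ω T) (k : ℤ) :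
    ∑ r ∈ Finset.Ico 1 T, (ω ^ (-(k * (r : ℤ))) - 1) / (ω ^ (r : ℤ) - 1)
      = ((k % (T : ℤ) : ℤ) : ℂ) := by
  have hres : 0 ≤ k % T ∧ k % T < T :=
    ⟨Int.emod_nonneg k (by omega), Int.emod_lt_of_pos k (by omega)⟩
  obtain ⟨m, hm⟩ : ∃ m : ℕ, (m : ℤ) = T - k % T := ⟨_, Int.toNat_of_nonneg (by omega)⟩
  have hmod : -k ≡ m [ZMOD T] :=
    Int.modEq_iff_dvd.mpr ⟨1 + k / T, by linear_combination hm - Int.emod_add_mul_ediv k T⟩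
  have hpow : ∀ r : ℕ, ω ^ (-(k * r)) = (ω ^ r) ^ m := fun r => by
    rw [← neg_mul, zpow_eq_zpow_of_modEq (hω.ne_zero (by omega)) hω.pow_eq_one (hmod.mul_right r),
      ← Nat.cast_mul, zpow_natCast, mul_comm, pow_mul]
  simp_rw [hpow, zpow_natCast]
  rw [hω.sum_pow_sub_one_div_pow_sub_one (by omega) (by omega), show k % T = T - m by omega]
  push_cast
  ring
end

section
/- Let ω ∈ ℂ be a primitive T-th root of unity, r ∈ ℤ, and u, v ∈ ℂ with u^T ≠ v^T. Then ∑_{k=0}^{T-1} ω^{-rk}/(ω^k u - v) = T·v^{T-1-[r]}·u^{[r]}/(u^T - v^T), where [r] ∈ {0,…,T-1} is the residue of r modulo T. -/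
theorem cyclotomic_twisted_partial_fraction_sum (T : ℕ) (hT : 1 ≤ T) (ω : ℂ)
    (hω : IsPrimitiveRoot ω T) (r : ℤ) (u v : ℂ) (huv : u ^ T ≠ v ^ T)
    (h : ∀ k : ℕ, ω ^ k * u ≠ v) :
    ∑ k ∈ Finset.range T, ω ^ (-(r * (k : ℤ))) / (ω ^ k * u - v)
      = (T : ℂ) * v ^ (T - 1 - (r % (T : ℤ)).toNat) * u ^ ((r % (T : ℤ)).toNat)
          / (u ^ T - v ^ T) := by
  have hT0 : (0:ℤ) < (T:ℤ) := by exact_mod_cast hT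
  set m : ℕ := (r % (T:ℤ)).toNat with hmdef
  have hmcast : (m : ℤ) = r % (T:ℤ) := Int.toNat_of_nonneg (Int.emod_nonneg r (by omega))
  have hmlt : m < T := by
    have := Int.emod_lt_of_pos r hT0
    omega
  have hω0 : ω ≠ 0 := hω.ne_zero (by omega)
  have hωT : ω ^ T = 1 := hω.pow_eq_one
  have hD : u ^ T - v ^ T ≠ 0 := sub_ne_zero.mpr huv
  have hden : ∀ k : ℕ, ω ^ k * u - v ≠ 0 := fun k => sub_ne_zero.mpr (h k)
  -- rewrite each term using geometric sum factorization
  have step1 : ∀ k ∈ Finset.range T,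
      ω ^ (-(r * (k : ℤ))) / (ω ^ k * u - v)
        = (∑ j ∈ Finset.range T,
            (ω ^ ((j : ℤ) - r)) ^ k * (u ^ j * v ^ (T - 1 - j))) / (u ^ T - v ^ T) := by
    intro k _
    rw [div_eq_div_iff (hden k) hD]
    have hxT : (ω ^ k * u) ^ T = u ^ T := by
      rw [mul_pow, ← pow_mul, mul_comm k T, pow_mul, hωT, one_pow, one_mul]
    calc ω ^ (-(r * (k : ℤ))) * (u ^ T - v ^ T)
        = ω ^ (-(r * (k : ℤ))) * ((ω ^ k * u) ^ T - v ^ T) := by rw [hxT]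
      _ = ω ^ (-(r * (k : ℤ))) * ((∑ j ∈ Finset.range T,
            (ω ^ k * u) ^ j * v ^ (T - 1 - j)) * (ω ^ k * u - v)) := by
            rw [geom_sum₂_mul]
      _ = (∑ j ∈ Finset.range T,
            (ω ^ ((j : ℤ) - r)) ^ k * (u ^ j * v ^ (T - 1 - j))) * (ω ^ k * u - v) := by
            rw [← mul_assoc, Finset.mul_sum, Finset.sum_mul, Finset.sum_mul]
            refine Finset.sum_congr rfl fun j _ => ?_
            have key : ω ^ (-(r * (k : ℤ))) * (ω ^ k) ^ j
                = (ω ^ ((j : ℤ) - r)) ^ k := by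
              rw [← zpow_natCast (ω ^ k) j, ← zpow_natCast ω k, ← zpow_mul,
                ← zpow_add₀ hω0, ← zpow_natCast (ω ^ ((j:ℤ) - r)) k, ← zpow_mul]
              congr 1
              ring
            calc ω ^ (-(r * (k : ℤ))) * ((ω ^ k * u) ^ j * v ^ (T - 1 - j)) * (ω ^ k * u - v)
                = (ω ^ (-(r * (k : ℤ))) * (ω ^ k) ^ j) * (u ^ j * v ^ (T - 1 - j))
                    * (ω ^ k * u - v) := by ring
              _ = _ := by rw [key]
  rw [Finset.sum_congr rfl step1, ← Finset.sum_div, Finset.sum_comm]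
  -- evaluate inner sums over k
  have inner : ∀ j ∈ Finset.range T,
      ∑ k ∈ Finset.range T, (ω ^ ((j : ℤ) - r)) ^ k * (u ^ j * v ^ (T - 1 - j))
        = (if j = m then (T : ℂ) * (u ^ m * v ^ (T - 1 - m)) else 0) := by
    intro j hj
    rw [← Finset.sum_mul]
    by_cases hjm : j = m
    · have hdvd : (T : ℤ) ∣ ((j : ℤ) - r) := by
        refine ⟨-(r / T), ?_⟩
        rw [hjm, hmcast, Int.emod_def]
        ring
      have hone : ω ^ ((j : ℤ) - r) = 1 := (hω.zpow_eq_one_iff_dvd _).mpr hdvd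
      rw [if_pos hjm, hone, hjm]
      simp
    · have hne1 : ω ^ ((j : ℤ) - r) ≠ 1 := by
        intro h1
        have hdvd := (hω.zpow_eq_one_iff_dvd _).mp h1
        have hjT : j < T := Finset.mem_range.mp hj
        have : (j : ℤ) % T = r % T := by
          rw [Int.emod_eq_emod_iff_emod_sub_eq_zero]
          exact Int.emod_eq_zero_of_dvd hdvd
        rw [Int.emod_eq_of_lt (by omega) (by exact_mod_cast hjT)] at this
        exact hjm (by omega)
      have hζT : (ω ^ ((j : ℤ) - r)) ^ T = 1 := by
        rw [← zpow_natCast (ω ^ ((j:ℤ) - r)) T, ← zpow_mul, mul_comm, zpow_mul,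
          zpow_natCast, hωT, one_zpow]
      rw [if_neg hjm, geom_sum_eq hne1, hζT, sub_self, zero_div, zero_mul]
  rw [Finset.sum_congr rfl inner, Finset.sum_ite_eq' (Finset.range T) m
    (fun _ => (T : ℂ) * (u ^ m * v ^ (T - 1 - m))), if_pos (Finset.mem_range.mpr hmlt)]
  ring
end

section
/- (Circle lemma) Let n ≥ 2 and let x : ℤ/nℤ → ℂ be injective (pairwise distinct values). Then ∑_{i ∈ ℤ/nℤ} ∏_{j ∈ ℤ/nℤ, j ≠ i} 1/(x_j - x_{j+1}) = 0. -/
theorem circle_lemma (n : ℕ) [NeZero n] (hn : 2 ≤ n) (x : ZMod n → ℂ)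
    (hx : Function.Injective x) :
    ∑ i : ZMod n, ∏ j ∈ Finset.univ.erase i, (x j - x (j + 1))⁻¹ = 0 := by
  haveI : Fact (1 < n) := ⟨hn⟩
  have hne : ∀ j : ZMod n, x j - x (j + 1) ≠ 0 := by
    intro j h
    rw [sub_eq_zero] at h
    have hj := hx h
    have : (1 : ZMod n) = 0 := by
      have := left_eq_add.mp hj
      exact this
    exact one_ne_zero this
  have key : ∀ i : ZMod n, ∏ j ∈ Finset.univ.erase i, (x j - x (j + 1))⁻¹
      = (x i - x (i + 1)) * ∏ j : ZMod n, (x j - x (j + 1))⁻¹ := by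
    intro i
    rw [← Finset.mul_prod_erase Finset.univ (fun j => (x j - x (j + 1))⁻¹)
      (Finset.mem_univ i), ← mul_assoc, mul_inv_cancel₀ (hne i), one_mul]
  simp_rw [key, ← Finset.sum_mul]
  have hsum : ∑ i : ZMod n, (x i - x (i + 1)) = 0 := by
    rw [Finset.sum_sub_distrib]
    rw [sub_eq_zero]
    exact (Finset.sum_equiv (Equiv.addRight (1 : ZMod n)) (by simp) (by simp)).symm
  rw [hsum, zero_mul]
end

section
/- Let 𝔤 be a finite-dimensional Lie algebra with automorphism σ of finite order T, ω a primitive T-th root of unity, 𝔥 ⊆ 𝔤 a σ-stable subspace and 𝔫 ⊆ 𝔤 a σ-stable subspace with [𝔥, 𝔫] ⊆ 𝔫. Define λ_0(h) := ∑_{r=1}^{T-1} tr_𝔫(σ^{-r} ∘ ad_h)/(1 - ω^r) for h ∈ 𝔥. Then λ_0(h) = λ_0(Π_0 h) for all h ∈ 𝔥, where Π_0 = (1/T)∑_{m=0}^{T-1} σ^m; i.e., λ_0 vanishes on ⊕_{k≠0} Π_k 𝔥. -/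
theorem lambda0_factors_through_Pi0 {L : Type*} [LieRing L] [LieAlgebra ℂ L]
    [FiniteDimensional ℂ L]
    (T : ℕ) (hT : 1 ≤ T) (ω : ℂ) (hω : IsPrimitiveRoot ω T)
    (σ : L →ₗ[ℂ] L) (hσLie : ∀ x y, σ ⁅x, y⁆ = ⁅σ x, σ y⁆) (hσT : σ ^ T = 1)
    (H N : Submodule ℂ L)
    (hσH : ∀ x ∈ H, σ x ∈ H) (hσN : ∀ x ∈ N, σ x ∈ N)
    (hHN : ∀ x ∈ H, ∀ n ∈ N, ⁅x, n⁆ ∈ N)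
    (σn : Module.End ℂ N) (hσn : ∀ v : N, (σn v : L) = σ (v : L))
    (adn : L →ₗ[ℂ] Module.End ℂ N)
    (hadn : ∀ x ∈ H, ∀ v : N, ((adn x) v : L) = ⁅x, (v : L)⁆)
    (lam0 : L → ℂ)
    (hlam0 : ∀ h : L, lam0 h = ∑ r ∈ Finset.Ico 1 T,
      LinearMap.trace ℂ N ((σn ^ (T - r)) ∘ₗ adn h) / (1 - ω ^ r)) :
    ∀ h ∈ H, lam0 h = lam0 ((T : ℂ)⁻¹ • ∑ m ∈ Finset.range T, (σ ^ m) h) := by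
  intro h hH
  -- powers of σ preserve H
  have hpowH : ∀ m : ℕ, (σ ^ m) h ∈ H := by
    intro m
    induction m with
    | zero => simpa using hH
    | succ k ih => rw [pow_succ']; simpa [Module.End.mul_apply] using hσH _ ih
  -- coercion of powers of σn
  have hσnpow : ∀ (k : ℕ) (v : N), (((σn ^ k) v : N) : L) = (σ ^ k) (v : L) := by
    intro k
    induction k with
    | zero => intro v; simp
    | succ k ih =>
      intro v
      rw [pow_succ', pow_succ', Module.End.mul_apply, Module.End.mul_apply, hσn, ih]
  -- σn ^ T = 1
  have hσnT : σn ^ T = 1 := by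
    ext v
    simp [hσnpow, hσT]
  -- key conjugation identity
  have hconj : ∀ x ∈ H, adn (σ x) = σn * adn x * σn ^ (T - 1) := by
    intro x hx
    ext v
    rw [hadn _ (hσH _ hx)]
    show (⁅σ x, (v : L)⁆ : L) = ((σn ((adn x) ((σn ^ (T-1)) v)) : N) : L)
    rw [hσn, hadn _ hx, hσnpow, hσLie]
    congr 1
    have : σ ((σ ^ (T-1)) (v : L)) = (σ ^ T) (v : L) := by
      rw [← Module.End.mul_apply, ← pow_succ', Nat.sub_add_cancel hT]
    rw [this, hσT]; rfl
  -- trace invariance under σ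
  have htr : ∀ r ∈ Finset.Ico 1 T, ∀ x ∈ H,
      LinearMap.trace ℂ N ((σn ^ (T - r)) ∘ₗ adn (σ x))
        = LinearMap.trace ℂ N ((σn ^ (T - r)) ∘ₗ adn x) := by
    intro r _ x hx
    rw [hconj _ hx]
    rw [← Module.End.mul_eq_comp, ← Module.End.mul_eq_comp]
    have h1 : σn ^ (T - r) * (σn * adn x * σn ^ (T - 1))
        = (σn ^ (T - r) * σn * adn x) * σn ^ (T - 1) := by simp [mul_assoc]
    rw [h1, LinearMap.trace_mul_comm]
    have h2 : σn ^ (T - 1) * (σn ^ (T - r) * σn * adn x)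
        = (σn ^ (T - 1) * σn ^ (T - r) * σn) * adn x := by simp [mul_assoc]
    rw [h2]
    congr 1
    have h3 : σn ^ (T - 1) * σn ^ (T - r) * σn = σn ^ ((T - 1) + (T - r) + 1) := by
      rw [← pow_add, ← pow_succ]
    rw [h3]
    have h4 : (T - 1) + (T - r) + 1 = T + (T - r) := by omega
    rw [h4, pow_add, hσnT, one_mul]
  -- extend to powers of σ
  have htrpow : ∀ r ∈ Finset.Ico 1 T, ∀ m : ℕ,
      LinearMap.trace ℂ N ((σn ^ (T - r)) ∘ₗ adn ((σ ^ m) h))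
        = LinearMap.trace ℂ N ((σn ^ (T - r)) ∘ₗ adn h) := by
    intro r hr m
    induction m with
    | zero => simp
    | succ k ih =>
      have : (σ ^ (k + 1)) h = σ ((σ ^ k) h) := by
        rw [pow_succ']; rfl
      rw [this, htr r hr _ (hpowH k), ih]
  -- now compute
  rw [hlam0, hlam0]
  apply Finset.sum_congr rfl
  intro r hr
  congr 1
  rw [map_smul, map_sum]
  have hcomp : (σn ^ (T - r)) ∘ₗ ((T : ℂ)⁻¹ • ∑ m ∈ Finset.range T, adn ((σ ^ m) h))
      = (T : ℂ)⁻¹ • ∑ m ∈ Finset.range T, (σn ^ (T - r)) ∘ₗ adn ((σ ^ m) h) := by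
    rw [← Module.End.mul_eq_comp, mul_smul_comm, Finset.mul_sum]
    simp [Module.End.mul_eq_comp]
  rw [hcomp, map_smul, map_sum]
  rw [Finset.sum_congr rfl (fun m _ => htrpow r hr m)]
  rw [Finset.sum_const, Finset.card_range, nsmul_eq_mul, smul_eq_mul, ← mul_assoc,
    inv_mul_cancel₀ (Nat.cast_ne_zero.mpr (by omega)), one_mul]
end

section
/- Let V₁,…,V_N be modules over a Lie algebra 𝔤, with {I_a} a basis of 𝔤 and {I^a} its dual basis for a nondegenerate invariant symmetric bilinear form. For pairwise distinct z₁,…,z_N ∈ ℂ, the quadratic Gaudin Hamiltonians H_i := ∑_{j≠i} ∑_a I^{a(i)} I_a^{(j)}/(z_i - z_j) ∈ U(𝔤)^{⊗N} pairwise commute: [H_i, H_j] = 0 for all i, j. -/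
/-!
The two-site Casimirs `Ω p q = ∑ₐ I^{a(p)} I_a^{(q)}` satisfy the infinitesimal braid relations:
they are symmetric, those on disjoint sites commute, and `⁅Ω p q, Ω p r + Ω q r⁆ = 0` because, by
invariance of the form, `Ω p q` commutes with the diagonal action `x^{(p)} + x^{(q)}` of `𝔤`.
Expanding `⁅H i, H j⁆`, only terms sharing a site survive; for each third site `m` they are
multiples of `⁅Ω i j, Ω i m⁆`, and the coefficients cancel by the partial-fraction identity
`1/((zᵢ-zⱼ)(zⱼ-zₘ)) + 1/((zⱼ-zᵢ)(zᵢ-zₘ)) = 1/((zᵢ-zₘ)(zⱼ-zₘ))`.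
-/

open DirectSum

attribute [local instance] LieRing.ofAssociativeRing

theorem Ring.lie_mul {A : Type*} [Ring A] (a b c : A) : ⁅a, b * c⁆ = ⁅a, b⁆ * c + b * ⁅a, c⁆ := by
  simp only [Ring.lie_def]; noncomm_ring

theorem Ring.mul_lie {A : Type*} [Ring A] (a b c : A) : ⁅a * b, c⁆ = a * ⁅b, c⁆ + ⁅a, c⁆ * b := by
  simp only [Ring.lie_def]; noncomm_ring

theorem lie_sum_sum_of_lie_eq_zero {A α : Type*} [LieRing A] (s : Finset α) (X Y : α → A)
    (h : ∀ m ∈ s, ∀ n ∈ s, m ≠ n → ⁅X m, Y n⁆ = 0) :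
    ⁅∑ m ∈ s, X m, ∑ n ∈ s, Y n⁆ = ∑ m ∈ s, ⁅X m, Y m⁆ := by
  rw [sum_lie_sum]
  refine Finset.sum_congr rfl fun m hm => ?_
  exact Finset.sum_eq_single_of_mem m hm fun n hn hnm => h m hm n hn hnm.symm

section DualPair

variable {K V M ι : Type*} [CommRing K] [AddCommGroup V] [Module K V] [AddCommGroup M]
  [Module K M] [Fintype ι] [DecidableEq ι] {B : LinearMap.BilinForm K V} {e f : ι → V}

theorem sum_dual_smul_eq (he : ∀ a b, B (f a) (e b) = if a = b then 1 else 0)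
    (hspan : Submodule.span K (Set.range e) = ⊤) (x : V) :
    ∑ a, B (f a) x • e a = x := by
  have h : ∑ a, (B (f a)).smulRight (e a) = LinearMap.id := by
    refine LinearMap.ext_on hspan ?_
    rintro _ ⟨b, rfl⟩
    simp [he, ite_smul]
  simpa using LinearMap.congr_fun h x

theorem sum_apply_dual_eq_sum_apply_dual_of_adjoint (hB : ∀ x y, B x y = B y x)
    (he : ∀ a b, B (f a) (e b) = if a = b then 1 else 0)
    (hspan : Submodule.span K (Set.range e) = ⊤) (T : V →ₗ[K] V →ₗ[K] M) {φ ψ : V →ₗ[K] V}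
    (hφψ : ∀ x y, B (φ x) y = B x (ψ y)) :
    ∑ a, T (φ (f a)) (e a) = ∑ a, T (e a) (ψ (f a)) := by
  have expand (x : V) : x = ∑ b, B (f b) x • e b := (sum_dual_smul_eq he hspan x).symm
  calc ∑ a, T (φ (f a)) (e a)
      = ∑ a, ∑ b, B (f b) (φ (f a)) • T (e b) (e a) := by
        refine Finset.sum_congr rfl fun a _ => ?_
        conv_lhs => rw [expand (φ (f a))]
        simp [map_sum, map_smul, LinearMap.sum_apply]
    _ = ∑ b, ∑ a, B (f a) (ψ (f b)) • T (e b) (e a) := by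
        rw [Finset.sum_comm]
        simp only [← hφψ, hB (φ _)]
    _ = ∑ b, T (e b) (ψ (f b)) := by
        refine Finset.sum_congr rfl fun b _ => ?_
        conv_rhs => rw [expand (ψ (f b))]
        simp [map_sum, map_smul]

theorem sum_apply_dual_comm (hB : ∀ x y, B x y = B y x)
    (he : ∀ a b, B (f a) (e b) = if a = b then 1 else 0)
    (hspan : Submodule.span K (Set.range e) = ⊤) (T : V →ₗ[K] V →ₗ[K] M) :
    ∑ a, T (f a) (e a) = ∑ a, T (e a) (f a) :=
  sum_apply_dual_eq_sum_apply_dual_of_adjoint hB he hspan T (φ := LinearMap.id)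
    (ψ := LinearMap.id) fun _ _ => rfl

end DualPair

section InvariantForm

variable {K L M ι : Type*} [CommRing K] [LieRing L] [LieAlgebra K L] [AddCommGroup M]
  [Module K M] [Fintype ι] [DecidableEq ι] {B : LinearMap.BilinForm K L} {e f : ι → L}

theorem sum_apply_lie_dual (hB : ∀ x y, B x y = B y x)
    (hinv : ∀ x y w, B ⁅x, y⁆ w = B x ⁅y, w⁆)
    (he : ∀ a b, B (f a) (e b) = if a = b then 1 else 0)
    (hspan : Submodule.span K (Set.range e) = ⊤) (T : L →ₗ[K] L →ₗ[K] M) (x : L) :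
    ∑ a, T ⁅f a, x⁆ (e a) = ∑ a, T (f a) ⁅x, e a⁆ := by
  have hadj : ∀ y w, B ((-LieAlgebra.ad K L x) y) w = B y (LieAlgebra.ad K L x w) := by
    intro y w
    rw [LinearMap.neg_apply, LieAlgebra.ad_apply, LieAlgebra.ad_apply, lie_skew, hinv]
  calc ∑ a, T ⁅f a, x⁆ (e a)
      = ∑ a, T (e a) ⁅x, f a⁆ := by
        simpa [lie_skew] using sum_apply_dual_eq_sum_apply_dual_of_adjoint hB he hspan T hadj
    _ = ∑ a, T (f a) ⁅x, e a⁆ := by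
        simpa using sum_apply_dual_comm hB he hspan (T.flip ∘ₗ LieAlgebra.ad K L x)

end InvariantForm

/-- The defining relations of the Drinfeld–Kohno Lie algebra of infinitesimal pure braids. -/
structure IsInfinitesimalBraid {κ A : Type*} [LieRing A] (Ω : κ → κ → A) : Prop where
  symm : ∀ {p q}, p ≠ q → Ω p q = Ω q p
  lie_eq_zero : ∀ {p q r s}, p ≠ r → p ≠ s → q ≠ r → q ≠ s → ⁅Ω p q, Ω r s⁆ = 0
  lie_add_eq_zero : ∀ {p q r}, p ≠ q → p ≠ r → q ≠ r → ⁅Ω p q, Ω p r + Ω q r⁆ = 0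

section Casimir

variable {K L A κ ι : Type*} [CommRing K] [LieRing L] [LieAlgebra K L] [Ring A] [Algebra K A]
  [Fintype ι] {e f : ι → L} {u : κ → L →ₗ⁅K⁆ A}

def casimir (u : κ → L →ₗ⁅K⁆ A) (e f : ι → L) (p q : κ) : A :=
  ∑ a, u p (f a) * u q (e a)

theorem casimir_eq_sum_apply (p q : κ) :
    casimir u e f p q = ∑ a, (LinearMap.mul K A).compl₁₂ (u p).toLinearMap (u q).toLinearMap
      (f a) (e a) := rfl

theorem casimir_commute_of_ne (hu : Pairwise fun p q => ∀ x y, Commute (u p x) (u q y))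
    {p q r : κ} (hpr : p ≠ r) (hqr : q ≠ r) (x : L) :
    Commute (casimir u e f p q) (u r x) :=
  Commute.sum_left _ _ _ fun _ _ => (hu hpr _ _).mul_left (hu hqr _ _)

variable [DecidableEq ι] {B : LinearMap.BilinForm K L}

theorem casimir_comm (hu : Pairwise fun p q => ∀ x y, Commute (u p x) (u q y))
    (hB : ∀ x y, B x y = B y x)
    (he : ∀ a b, B (f a) (e b) = if a = b then 1 else 0)
    (hspan : Submodule.span K (Set.range e) = ⊤) {p q : κ} (hpq : p ≠ q) :
    casimir u e f p q = casimir u e f q p := by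
  rw [casimir_eq_sum_apply, sum_apply_dual_comm hB he hspan]
  exact Finset.sum_congr rfl fun a _ => (hu hpq _ _).eq

theorem lie_casimir_add (hu : Pairwise fun p q => ∀ x y, Commute (u p x) (u q y))
    (hB : ∀ x y, B x y = B y x)
    (hinv : ∀ x y w, B ⁅x, y⁆ w = B x ⁅y, w⁆)
    (he : ∀ a b, B (f a) (e b) = if a = b then 1 else 0)
    (hspan : Submodule.span K (Set.range e) = ⊤) {p q : κ} (hpq : p ≠ q) (x : L) :
    ⁅casimir u e f p q, u p x + u q x⁆ = 0 := by
  have hterm (a : ι) : ⁅u p (f a) * u q (e a), u p x + u q x⁆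
      = u p ⁅f a, x⁆ * u q (e a) + u p (f a) * u q ⁅e a, x⁆ := by
    rw [Ring.mul_lie, lie_add, lie_add, (hu hpq.symm _ _).lie_eq, (hu hpq _ _).lie_eq,
      ← LieHom.map_lie, ← LieHom.map_lie, zero_add, add_zero, add_comm]
  have hinvariant := sum_apply_lie_dual hB hinv he hspan
    ((LinearMap.mul K A).compl₁₂ (u p).toLinearMap (u q).toLinearMap) x
  simp only [LinearMap.compl₁₂_apply, LinearMap.mul_apply', LieHom.coe_toLinearMap] at hinvariant
  rw [casimir, sum_lie, Finset.sum_congr rfl fun a _ => hterm a, Finset.sum_add_distrib,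
    hinvariant, ← Finset.sum_add_distrib]
  refine Finset.sum_eq_zero fun a _ => ?_
  rw [← lie_skew x, map_neg, mul_neg, neg_add_cancel]

theorem isInfinitesimalBraid_casimir (hu : Pairwise fun p q => ∀ x y, Commute (u p x) (u q y))
    (hB : ∀ x y, B x y = B y x)
    (hinv : ∀ x y w, B ⁅x, y⁆ w = B x ⁅y, w⁆)
    (he : ∀ a b, B (f a) (e b) = if a = b then 1 else 0)
    (hspan : Submodule.span K (Set.range e) = ⊤) :
    IsInfinitesimalBraid (casimir u e f) where
  symm := casimir_comm hu hB he hspan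
  lie_eq_zero hpr hps hqr hqs := (Commute.sum_right _ _ _ fun _ _ =>
    ((casimir_commute_of_ne hu hpr hqr _).mul_right (casimir_commute_of_ne hu hps hqs _))).lie_eq
  lie_add_eq_zero {p q r} hpq hpr hqr := by
    have hsum : casimir u e f p r + casimir u e f q r
        = ∑ a, (u p (f a) + u q (f a)) * u r (e a) := by
      simp only [casimir, ← Finset.sum_add_distrib, add_mul]
    rw [hsum, lie_sum]
    refine Finset.sum_eq_zero fun a _ => ?_
    rw [Ring.lie_mul, (casimir_commute_of_ne hu hpr hqr _).lie_eq, mul_zero, add_zero,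
      lie_casimir_add hu hB hinv he hspan hpq, zero_mul]

end Casimir

section Gaudin

variable {K A κ : Type*} [Field K] [LieRing A] [LieAlgebra K A] {Ω : κ → κ → A} {z : κ → K}

theorem inv_sub_mul_inv_sub_add {a b c : K} (hab : a ≠ b) (hac : a ≠ c) (hbc : b ≠ c) :
    (a - b)⁻¹ * (b - c)⁻¹ + (a - c)⁻¹ * (b - a)⁻¹ = (a - c)⁻¹ * (b - c)⁻¹ := by
  have := sub_ne_zero.2 hab
  have := sub_ne_zero.2 hab.symm
  have := sub_ne_zero.2 hac
  have := sub_ne_zero.2 hbc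
  field_simp
  ring

theorem IsInfinitesimalBraid.gaudin_three_point (hΩ : IsInfinitesimalBraid Ω)
    (hz : Function.Injective z) {i j m : κ} (hij : i ≠ j) (him : i ≠ m) (hjm : j ≠ m) :
    ⁅(z i - z j)⁻¹ • Ω i j, (z j - z m)⁻¹ • Ω j m⁆ + ⁅(z i - z m)⁻¹ • Ω i m, (z j - z i)⁻¹ • Ω j i⁆
      + ⁅(z i - z m)⁻¹ • Ω i m, (z j - z m)⁻¹ • Ω j m⁆ = 0 := by
  have h₁ : ⁅Ω i j, Ω j m⁆ = -⁅Ω i j, Ω i m⁆ :=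
    eq_neg_of_add_eq_zero_right (by rw [← lie_add, hΩ.lie_add_eq_zero hij him hjm])
  have h₂ : ⁅Ω i m, Ω j i⁆ = -⁅Ω i j, Ω i m⁆ := by
    rw [← hΩ.symm hij, lie_skew]
  have h₃ : ⁅Ω i m, Ω j m⁆ = ⁅Ω i j, Ω i m⁆ := by
    have h := hΩ.lie_add_eq_zero him.symm hjm.symm hij
    rw [lie_add, ← hΩ.symm him, ← hΩ.symm hjm] at h
    rw [eq_neg_of_add_eq_zero_left h, lie_skew]
  simp only [smul_lie, lie_smul, smul_smul, h₁, h₂, h₃, smul_neg, ← neg_smul, ← add_smul]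
  convert zero_smul K ⁅Ω i j, Ω i m⁆ using 2
  linear_combination -inv_sub_mul_inv_sub_add (hz.ne hij) (hz.ne him) (hz.ne hjm)

variable [Fintype κ] [DecidableEq κ]

def gaudinHamiltonian (Ω : κ → κ → A) (z : κ → K) (p : κ) : A :=
  ∑ q ∈ Finset.univ.erase p, (z p - z q)⁻¹ • Ω p q

theorem IsInfinitesimalBraid.lie_gaudinHamiltonian (hΩ : IsInfinitesimalBraid Ω)
    (hz : Function.Injective z) (i j : κ) :
    ⁅gaudinHamiltonian Ω z i, gaudinHamiltonian Ω z j⁆ = 0 := by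
  rcases eq_or_ne i j with rfl | hij
  · exact lie_self _
  set t : κ → κ → A := fun p q => (z p - z q)⁻¹ • Ω p q
  set S := (Finset.univ.erase i).erase j
  have hsplit {p q : κ} (hq : q ≠ p) :
      gaudinHamiltonian Ω z p = t p q + ∑ m ∈ (Finset.univ.erase p).erase q, t p m :=
    (Finset.add_sum_erase _ _ (Finset.mem_erase.2 ⟨hq, Finset.mem_univ q⟩)).symm
  have hcross : ⁅t i j, t j i⁆ = 0 := by
    simp only [t, smul_lie, lie_smul, hΩ.symm hij.symm, lie_self, smul_zero]
  have hoffdiag : ∀ m ∈ S, ∀ n ∈ S, m ≠ n → ⁅t i m, t j n⁆ = 0 := by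
    intro m hm n hn hmn
    simp only [S, Finset.mem_erase, Finset.mem_univ, and_true] at hm hn
    simp only [t, smul_lie, lie_smul, hΩ.lie_eq_zero hij hn.2.symm hm.1 hmn, smul_zero]
  rw [hsplit hij.symm, hsplit hij, Finset.erase_right_comm (a := j), lie_add, add_lie, add_lie,
    hcross, lie_sum, sum_lie, lie_sum_sum_of_lie_eq_zero S _ _ hoffdiag, zero_add, add_left_comm,
    ← add_assoc, ← Finset.sum_add_distrib, ← Finset.sum_add_distrib]
  refine Finset.sum_eq_zero fun m hm => ?_
  simp only [Finset.mem_erase, Finset.mem_univ, and_true] at hm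
  exact hΩ.gaudin_three_point hz hij hm.2.symm hm.1.symm

end Gaudin

theorem UniversalEnvelopingAlgebra.commute_ι_of_of_ne {K L κ : Type*} [CommRing K] [LieRing L]
    [LieAlgebra K L] [DecidableEq κ] {p q : κ} (hpq : p ≠ q) (x y : L) :
    Commute (UniversalEnvelopingAlgebra.ι K (of (fun _ : κ => L) p x))
      (UniversalEnvelopingAlgebra.ι K (of (fun _ : κ => L) q y)) := by
  rw [commute_iff_lie_eq, ← LieHom.map_lie, lie_of_of_ne _ hpq, map_zero]

/-- `U(𝔤)^{⊗N}` is realised as the universal enveloping algebra of the direct sum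
`⨁ (i : Fin N), 𝔤` of `N` copies of `𝔤`, and `A^{(i)}` corresponds to `ι (of i A)`. -/
theorem gaudin_hamiltonians_commute_general {L : Type*} [LieRing L] [LieAlgebra ℂ L]
    (B : LinearMap.BilinForm ℂ L) (hsymm : ∀ x y, B x y = B y x)
    (hinv : ∀ x y w, B ⁅x, y⁆ w = B x ⁅y, w⁆)
    {ι : Type*} [Fintype ι] [DecidableEq ι]
    (e f : ι → L) (he : ∀ i j, B (f i) (e j) = if i = j then 1 else 0)
    (hbasis : Submodule.span ℂ (Set.range e) = ⊤)
    (N : ℕ) (z : Fin N → ℂ) (hz : Function.Injective z)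
    (H : Fin N → UniversalEnvelopingAlgebra ℂ (⨁ _ : Fin N, L))
    (hH : ∀ i, H i = ∑ j ∈ Finset.univ.erase i, ∑ a : ι, (z i - z j)⁻¹ •
      (UniversalEnvelopingAlgebra.ι ℂ (DirectSum.of (fun _ : Fin N => L) i (f a)) *
        UniversalEnvelopingAlgebra.ι ℂ (DirectSum.of (fun _ : Fin N => L) j (e a)))) :
    ∀ i j, Commute (H i) (H j) := by
  let u (p : Fin N) : L →ₗ⁅ℂ⁆ UniversalEnvelopingAlgebra ℂ (⨁ _ : Fin N, L) :=
    (UniversalEnvelopingAlgebra.ι ℂ).comp (lieAlgebraOf ℂ (Fin N) (fun _ => L) p)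
  have hu : Pairwise fun p q => ∀ x y, Commute (u p x) (u q y) :=
    fun _ _ hpq => UniversalEnvelopingAlgebra.commute_ι_of_of_ne hpq
  have hHΩ (p : Fin N) : H p = gaudinHamiltonian (casimir u e f) z p := by
    simp only [hH, gaudinHamiltonian, casimir, Finset.smul_sum]
    rfl
  intro i j
  rw [commute_iff_lie_eq, hHΩ, hHΩ]
  exact (isInfinitesimalBraid_casimir hu hsymm hinv he hbasis).lie_gaudinHamiltonian hz i j

/-- The quadratic Gaudin Hamiltonians pairwise commute.  Here
`U(𝔤)^{⊗N}` is realised as the universal enveloping algebra of the direct sum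
`⨁ (i : Fin N), 𝔤` of `N` copies of `𝔤`, and `A^{(i)}` corresponds to
`ι (of i A)`. -/
theorem gaudin_hamiltonians_commute {L : Type*} [LieRing L] [LieAlgebra ℂ L]
    [Module.Finite ℂ L]
    (B : LinearMap.BilinForm ℂ L) (hsymm : ∀ x y, B x y = B y x)
    (hinv : ∀ x y w, B ⁅x, y⁆ w = B x ⁅y, w⁆) (hnd : B.Nondegenerate)
    {ι : Type*} [Fintype ι] [DecidableEq ι]
    (e f : ι → L) (he : ∀ i j, B (f i) (e j) = if i = j then 1 else 0)
    (hbasis : Submodule.span ℂ (Set.range e) = ⊤)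
    (N : ℕ) (z : Fin N → ℂ) (hz : Function.Injective z)
    (H : Fin N → UniversalEnvelopingAlgebra ℂ (⨁ _ : Fin N, L))
    (hH : ∀ i, H i = ∑ j ∈ Finset.univ.erase i, ∑ a : ι, (z i - z j)⁻¹ •
      (UniversalEnvelopingAlgebra.ι ℂ (DirectSum.of (fun _ : Fin N => L) i (f a)) *
        UniversalEnvelopingAlgebra.ι ℂ (DirectSum.of (fun _ : Fin N => L) j (e a)))) :
    ∀ i j, Commute (H i) (H j) :=
  gaudin_hamiltonians_commute_general B hsymm hinv e f he hbasis N z hz H hH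
end
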